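/- arXiv:1703.07544 — 3 statements merged into one kernel-verified Lean document; each statement's English description precedes it below -/
import Mathlib

section
/- Let W be an elliptic curve over a field F given by a smooth Weierstrass equation with projective Weierstrass polynomial F_W ∈ F[X,Y,Z], let n' and l be positive integers (l ≥ 1), and let P_1, …, P_{3n'+l} be pairwise distinct points of W(F). If f ∈ F[X,Y,Z] is a nonzero homogeneous polynomial of degree n' that vanishes at all of the points P_1, …, P_{3n'+l}, then F_W divides f. -/
/-!
Dehomogenize at `Z = 1` and work in the affine coordinate ring `F[W]`, free over `F[X]` with basis
`1, y`. The degree of the norm `N(p + q y) ∈ F[X]` is `max (2 deg p) (2 deg q + 3)`, the pole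
order at `O`: it is ultrametric and additive on products, so it is at most `2 i + 3 j` on a
monomial `x^i y^j`, hence at most `3 n'` on a homogeneous `f` of degree `n'`, and strictly less
if `f` vanishes at `O`. Every affine zero `(a, b)` of `h` makes `a` a root of `N(h)`, and two zeros
above `a` (there are at most two) make it a double root, so a nonzero `h` has at most `deg N(h)`
affine zeros. Hence `W(X, Y, 1) ∣ f(X, Y, 1)`; homogenizing the quotient gives `W · U = Z^k f`,
and `Z ∤ W` yields `W ∣ f`.
-/

open Finset Polynomial
open scoped Polynomial.Bivariate

namespace MvPolynomial

variable {R : Type*} [CommRing R]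

noncomputable def dehomogenize : MvPolynomial (Fin 3) R →ₐ[R] R[X][Y] :=
  aeval ![Polynomial.C Polynomial.X, Y, 1]

@[simp]
lemma dehomogenize_X_two : dehomogenize (X 2 : MvPolynomial (Fin 3) R) = 1 := by
  simp [dehomogenize]

lemma dehomogenize_monomial (d : Fin 3 →₀ ℕ) (c : R) :
    dehomogenize (monomial d c) =
      Polynomial.C (Polynomial.C c * Polynomial.X ^ d 0) * Y ^ d 1 := by
  simp [dehomogenize, aeval_monomial, Finsupp.prod_fintype, Fin.prod_univ_three,
    Polynomial.algebraMap_apply]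
  ring

lemma evalEval_dehomogenize (g : MvPolynomial (Fin 3) R) (x y : R) :
    (dehomogenize g).evalEval x y = eval ![x, y, 1] g := by
  induction g using MvPolynomial.induction_on with
  | C a => simp [dehomogenize]
  | add p q hp hq => simp [hp, hq]
  | mul_X p i hp => fin_cases i <;> simp_all [dehomogenize, Polynomial.evalEval_C]

lemma coeff_coeff_dehomogenize (g : MvPolynomial (Fin 3) R) (i j : ℕ) :
    ((dehomogenize g).coeff j).coeff i =
      ∑ d ∈ g.support with d 0 = i ∧ d 1 = j, g.coeff d := by
  conv_lhs => rw [g.as_sum]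
  simp only [map_sum, Polynomial.finsetSum_coeff, dehomogenize_monomial, sum_filter,
    Polynomial.coeff_C_mul_X_pow]
  refine sum_congr rfl fun d _ => ?_
  by_cases hj : j = d 1 <;> by_cases hi : i = d 0 <;> simp [hi, hj, eq_comm]

lemma dehomogenize_surjective : Function.Surjective (dehomogenize (R := R)) := by
  intro u
  refine ⟨rename Fin.castSucc (Bivariate.equivMvPolynomial R u), ?_⟩
  rw [dehomogenize, aeval_rename, show (![Polynomial.C Polynomial.X, Y, 1] ∘ Fin.castSucc :
    Fin 2 → R[X][Y]) = ![Polynomial.C Polynomial.X, Y] by ext i; fin_cases i <;> rfl]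
  exact (Bivariate.equivMvPolynomial R).symm_apply_apply u

lemma IsHomogeneous.coeff_single_eq_eval {σ : Type*} [Fintype σ] [DecidableEq σ]
    {g : MvPolynomial σ R} {n : ℕ} (hg : g.IsHomogeneous n) (i : σ) :
    g.coeff (Finsupp.single i n) = eval (Pi.single i 1) g := by
  rw [eval_eq', sum_eq_single (Finsupp.single i n)]
  · rw [prod_eq_one fun j _ => ?_, mul_one]
    by_cases hj : j = i <;> simp [hj]
  · intro d hd hne
    obtain ⟨j, hji, hdj⟩ : ∃ j ≠ i, d j ≠ 0 := by
      by_contra! h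
      have hdi : d = Finsupp.single i (d i) := Finsupp.ext fun j => by
        by_cases hj : j = i
        · simp [hj]
        · simp [h j hj, Ne.symm hj]
      have hw := hg (mem_support_iff.mp hd)
      rw [hdi, Finsupp.weight_single] at hw
      simp only [smul_eq_mul, Pi.one_apply, mul_one] at hw
      exact hne (hw ▸ hdi)
    rw [prod_eq_zero (mem_univ j) (by simp [hji, hdj]), mul_zero]
  · intro h
    rw [notMem_support_iff.mp h, zero_mul]

section FinThree

variable {g : MvPolynomial (Fin 3) R} {n : ℕ}

lemma IsHomogeneous.add_add_eq_of_mem_support (hg : g.IsHomogeneous n) {d : Fin 3 →₀ ℕ}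
    (hd : d ∈ g.support) : d 0 + d 1 + d 2 = n := by
  rw [hg.degree_eq_sum_deg_support hd]
  change _ = d.degree
  rw [Finsupp.degree_eq_sum, Fin.sum_univ_three]

lemma IsHomogeneous.two_mul_add_three_mul_le (hg : g.IsHomogeneous n) {d : Fin 3 →₀ ℕ}
    (hd : d ∈ g.support) : 2 * d 0 + 3 * d 1 ≤ 3 * n := by
  have := hg.add_add_eq_of_mem_support hd
  omega

lemma IsHomogeneous.two_mul_add_three_mul_lt (hg : g.IsHomogeneous n)
    (h : eval ![0, 1, 0] g = 0) {d : Fin 3 →₀ ℕ} (hd : d ∈ g.support) :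
    2 * d 0 + 3 * d 1 < 3 * n := by
  have hsum := hg.add_add_eq_of_mem_support hd
  refine lt_of_le_of_ne (by omega) fun h3 => mem_support_iff.mp hd ?_
  have hd : d = Finsupp.single 1 n := Finsupp.ext fun i => by fin_cases i <;> simp <;> omega
  rw [hd, hg.coeff_single_eq_eval, ← h,
    show (Pi.single 1 1 : Fin 3 → R) = ![0, 1, 0] by ext i; fin_cases i <;> rfl]

lemma eq_zero_of_dehomogenize_eq_zero (hg : g.IsHomogeneous n) (h : dehomogenize g = 0) :
    g = 0 := by
  ext d
  rw [coeff_zero]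
  by_cases hd : d ∈ g.support
  · have hcoeff := coeff_coeff_dehomogenize g (d 0) (d 1)
    rw [h, Polynomial.coeff_zero, Polynomial.coeff_zero, sum_eq_single_of_mem d
      (mem_filter.mpr ⟨hd, rfl, rfl⟩)] at hcoeff
    · exact hcoeff.symm
    · intro e he hne
      obtain ⟨he, h0, h1⟩ := mem_filter.mp he
      have h2 : e 2 = d 2 := by
        have := hg.add_add_eq_of_mem_support he
        have := hg.add_add_eq_of_mem_support hd
        omega
      exact absurd (Finsupp.ext fun i => by fin_cases i <;> assumption) hne
  · exact notMem_support_iff.mp hd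

end FinThree

lemma exists_isHomogeneous_dehomogenize_eq (u : R[X][Y]) (n : ℕ) :
    ∃ k, ∃ U : MvPolynomial (Fin 3) R, U.IsHomogeneous (n + k) ∧ dehomogenize U = u := by
  obtain ⟨U₀, rfl⟩ := dehomogenize_surjective u
  refine ⟨U₀.totalDegree, ∑ i ∈ range (n + U₀.totalDegree + 1),
    X 2 ^ (n + U₀.totalDegree - i) * homogeneousComponent i U₀,
    IsHomogeneous.sum _ _ _ fun i hi => ?_, ?_⟩
  · have := mem_range.mp hi
    have h := (isHomogeneous_X_pow (2 : Fin 3) (n + U₀.totalDegree - i)).mul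
      (homogeneousComponent_isHomogeneous i U₀)
    rwa [Nat.sub_add_cancel (by omega)] at h
  · simp only [map_sum, map_mul, map_pow, dehomogenize_X_two, one_pow, one_mul]
    rw [← map_sum, ← sum_subset (range_subset_range.mpr
        (by omega : U₀.totalDegree + 1 ≤ n + U₀.totalDegree + 1)) fun i _ hi =>
        homogeneousComponent_eq_zero _ _ (by simp at hi; omega), sum_homogeneousComponent]

end MvPolynomial

namespace WeierstrassCurve.Affine

lemma card_filter_fst_eq_le_two {F : Type*} [Field F] [DecidableEq F] {W : Affine F}
    {S : Finset (F × F)} (hS : ∀ r ∈ S, W.Equation r.1 r.2) (x : F) :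
    #(S.filter fun r => x = r.1) ≤ 2 := by
  rcases (S.filter fun r => x = r.1).eq_empty_or_nonempty with h | ⟨r, hr⟩
  · simp [h]
  obtain ⟨hrS, rfl⟩ := mem_filter.mp hr
  calc #(S.filter fun r' => r.1 = r'.1) ≤ #{(r.1, r.2), (r.1, W.negY r.1 r.2)} :=
        card_le_card fun r' hr' => by
          obtain ⟨hr'S, hx⟩ := mem_filter.mp hr'
          rcases Y_eq_of_X_eq (hS r' hr'S) (hS r hrS) hx.symm with hy | hy <;>
            simp [Prod.ext_iff, hx, hy]
    _ ≤ 2 := card_le_two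

namespace CoordinateRing

section Ring

variable {R : Type*} [CommRing R] {W : WeierstrassCurve.Affine R}

lemma evalEval_eq_of_mk_eq_smul_basis {h : R[X][Y]} {p q : R[X]}
    (hpq : mk W h = p • (1 : W.CoordinateRing) + q • mk W Y) {x y : R} (hxy : W.Equation x y) :
    h.evalEval x y = p.eval x + q.eval x * y := by
  rw [smul, smul, mul_one, ← map_mul, ← map_add, AdjoinRoot.mk_eq_mk] at hpq
  obtain ⟨g, hg⟩ := hpq
  have hW : W.polynomial.evalEval x y = 0 := hxy
  have := congrArg (evalEval x y) hg
  simp only [evalEval_sub, evalEval_add, evalEval_mul, evalEval_C, evalEval_X, hW,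
    zero_mul] at this
  linear_combination this

lemma eval_norm_smul_basis_eq_zero {p q : R[X]} {x y : R} (hxy : W.Equation x y)
    (h : p.eval x + q.eval x * y = 0) :
    (Algebra.norm R[X] (p • (1 : W.CoordinateRing) + q • mk W Y)).eval x = 0 := by
  rw [norm_smul_basis]
  rw [equation_iff] at hxy
  simp only [eval_sub, eval_mul, eval_pow, eval_add, eval_C, eval_X]
  linear_combination (q.eval x) ^ 2 * hxy +
    (p.eval x - q.eval x * (W.a₁ * x + W.a₃) - q.eval x * y) * h

lemma sq_dvd_norm_smul_basis {p q : R[X]} {x : R} (hp : p.eval x = 0) (hq : q.eval x = 0) :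
    (X - C x) ^ 2 ∣ Algebra.norm R[X] (p • (1 : W.CoordinateRing) + q • mk W Y) := by
  obtain ⟨p', rfl⟩ := dvd_iff_isRoot.mpr hp
  obtain ⟨q', rfl⟩ := dvd_iff_isRoot.mpr hq
  rw [norm_smul_basis]
  exact ⟨p' ^ 2 - p' * q' * (C W.a₁ * X + C W.a₃) -
    q' ^ 2 * (X ^ 3 + C W.a₂ * X ^ 2 + C W.a₄ * X + C W.a₆), by ring⟩

variable [IsDomain R]

lemma degree_norm_add_le (a b : W.CoordinateRing) :
    (Algebra.norm R[X] (a + b)).degree ≤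
      max (Algebra.norm R[X] a).degree (Algebra.norm R[X] b).degree := by
  obtain ⟨p, q, rfl⟩ := exists_smul_basis_eq a
  obtain ⟨p', q', rfl⟩ := exists_smul_basis_eq b
  rw [show p • 1 + q • mk W Y + (p' • 1 + q' • mk W Y) =
    (p + p') • (1 : W.CoordinateRing) + (q + q') • mk W Y by module]
  simp only [degree_norm_smul_basis]
  have hp := degree_add_le p p'
  have hq := degree_add_le q q'
  refine max_le ?_ ?_
  · rcases max_choice p.degree p'.degree with h | h <;> rw [h] at hp
    · exact le_max_of_le_left (le_max_of_le_left (by gcongr))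
    · exact le_max_of_le_right (le_max_of_le_left (by gcongr))
  · rcases max_choice q.degree q'.degree with h | h <;> rw [h] at hq
    · exact le_max_of_le_left (le_max_of_le_right (by gcongr))
    · exact le_max_of_le_right (le_max_of_le_right (by gcongr))

lemma degree_norm_mul (a b : W.CoordinateRing) :
    (Algebra.norm R[X] (a * b)).degree =
      (Algebra.norm R[X] a).degree + (Algebra.norm R[X] b).degree := by
  rw [map_mul, degree_mul]

lemma degree_norm_mk_C (p : R[X]) : (Algebra.norm R[X] (mk W (C p))).degree = 2 • p.degree := by
  have := degree_norm_smul_basis (W' := W) p 0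
  rw [zero_smul, add_zero, smul, mul_one] at this
  simpa using this

lemma degree_norm_mk_Y : (Algebra.norm R[X] (mk W Y)).degree = 3 := by
  simpa using degree_norm_smul_basis (W' := W) 0 1

lemma degree_norm_mk_dehomogenize_lt {g : MvPolynomial (Fin 3) R} {c : ℕ}
    (hg : ∀ d ∈ g.support, 2 * d 0 + 3 * d 1 < c) :
    (Algebra.norm R[X] (mk W (MvPolynomial.dehomogenize g))).degree < c := by
  rw [g.as_sum, map_sum, map_sum]
  refine sum_induction _ (fun a => (Algebra.norm R[X] a).degree < c)
    (fun a b ha hb => (degree_norm_add_le a b).trans_lt (max_lt ha hb))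
    (by simp [(Algebra.norm_eq_zero_iff_of_basis (CoordinateRing.basis W)).mpr]) fun d hd => ?_
  rw [MvPolynomial.dehomogenize_monomial, map_mul, degree_norm_mul, map_pow, map_pow, degree_pow,
    degree_norm_mk_C, degree_norm_mk_Y]
  calc 2 • (C (g.coeff d) * X ^ d 0).degree + d 1 • (3 : WithBot ℕ)
      ≤ 2 • (d 0 : WithBot ℕ) + d 1 • 3 := by gcongr; exact degree_C_mul_X_pow_le _ _
    _ = ((2 * d 0 + 3 * d 1 : ℕ) : WithBot ℕ) := by push_cast; simp only [nsmul_eq_mul]; ring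
    _ < (c : WithBot ℕ) := by exact_mod_cast hg d hd

end Ring

section Field

variable {F : Type*} [Field F] [DecidableEq F] {W : WeierstrassCurve.Affine F}
  {S : Finset (F × F)} {p q : F[X]}

lemma card_filter_fst_eq_le_rootMultiplicity
    (hS : ∀ r ∈ S, W.Equation r.1 r.2 ∧ p.eval r.1 + q.eval r.1 * r.2 = 0)
    (hpq : p • (1 : W.CoordinateRing) + q • mk W Y ≠ 0) (x : F) :
    #(S.filter fun r => x = r.1) ≤
      (Algebra.norm F[X] (p • (1 : W.CoordinateRing) + q • mk W Y)).rootMultiplicity x := by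
  have hN := (Algebra.norm_ne_zero_iff_of_basis (CoordinateRing.basis W)).mpr hpq
  rcases (S.filter fun r => x = r.1).eq_empty_or_nonempty with h | ⟨r, hr⟩
  · simp [h]
  obtain ⟨hrS, rfl⟩ := mem_filter.mp hr
  by_cases hsub : (S.filter fun r' => r.1 = r'.1) ⊆ {r}
  · calc #(S.filter fun r' => r.1 = r'.1) ≤ 1 := (card_le_card hsub).trans (card_singleton r).le
      _ ≤ _ := (rootMultiplicity_pos hN).mpr
          (eval_norm_smul_basis_eq_zero (hS r hrS).1 (hS r hrS).2)
  obtain ⟨r', hr', hne⟩ := not_subset.mp hsub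
  obtain ⟨hr'S, hx⟩ := mem_filter.mp hr'
  have hy : r.2 ≠ r'.2 := fun hy => hne (mem_singleton.mpr (Prod.ext hx.symm hy.symm))
  have hq : q.eval r.1 = 0 := by
    have h' := (hS r' hr'S).2
    rw [← hx] at h'
    refine (mul_eq_zero.mp ?_).resolve_right (sub_ne_zero.mpr hy)
    linear_combination (hS r hrS).2 - h'
  have hp : p.eval r.1 = 0 := by linear_combination (hS r hrS).2 - r.2 * hq
  calc #(S.filter fun r' => r.1 = r'.1) ≤ 2 :=
        card_filter_fst_eq_le_two (fun r hr => (hS r hr).1) r.1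
    _ ≤ _ := (le_rootMultiplicity_iff hN).mpr (sq_dvd_norm_smul_basis hp hq)

lemma card_le_natDegree_norm
    (hS : ∀ r ∈ S, W.Equation r.1 r.2 ∧ p.eval r.1 + q.eval r.1 * r.2 = 0)
    (hpq : p • (1 : W.CoordinateRing) + q • mk W Y ≠ 0) :
    #S ≤ (Algebra.norm F[X] (p • (1 : W.CoordinateRing) + q • mk W Y)).natDegree := by
  calc #S = Multiset.card (S.val.map Prod.fst) := (Multiset.card_map _ _).symm
    _ ≤ Multiset.card (Algebra.norm F[X] (p • (1 : W.CoordinateRing) + q • mk W Y)).roots :=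
        Multiset.card_le_card <| Multiset.le_iff_count.mpr fun x => by
          rw [Multiset.count_map, count_roots]
          exact card_filter_fst_eq_le_rootMultiplicity hS hpq x
    _ ≤ _ := card_roots' _

theorem mk_eq_zero_of_degree_norm_lt_card {h : F[X][Y]}
    (hS : ∀ r ∈ S, W.Equation r.1 r.2 ∧ h.evalEval r.1 r.2 = 0)
    (hdeg : (Algebra.norm F[X] (mk W h)).degree < #S) : mk W h = 0 := by
  by_contra hne
  obtain ⟨p, q, hpq⟩ := exists_smul_basis_eq (mk W h)
  have hcard := card_le_natDegree_norm (S := S) (fun r hr =>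
    ⟨(hS r hr).1, evalEval_eq_of_mk_eq_smul_basis hpq.symm (hS r hr).1 ▸ (hS r hr).2⟩)
    (hpq ▸ hne)
  rw [hpq] at hcard
  exact hcard.not_gt <| (natDegree_lt_iff_degree_lt
    ((Algebra.norm_ne_zero_iff_of_basis (CoordinateRing.basis W)).mpr hne)).mpr hdeg

end Field

end CoordinateRing

end WeierstrassCurve.Affine

namespace WeierstrassCurve.Projective

open MvPolynomial

section Ring

variable {R : Type*} [CommRing R] (W : WeierstrassCurve.Projective R)

lemma isHomogeneous_polynomial : W.polynomial.IsHomogeneous 3 := by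
  have hX (i : Fin 3) : (X i : MvPolynomial (Fin 3) R).IsHomogeneous 1 := isHomogeneous_X R i
  have hC (a : R) : (C a : MvPolynomial (Fin 3) R).IsHomogeneous 0 := isHomogeneous_C _ a
  rw [polynomial]
  exact .sub (.add (.add (((hX 1).pow 2).mul (hX 2)) ((((hC _).mul (hX 0)).mul (hX 1)).mul (hX 2)))
      (((hC _).mul (hX 1)).mul ((hX 2).pow 2)))
    (.add (.add (.add ((hX 0).pow 3) (((hC _).mul ((hX 0).pow 2)).mul (hX 2)))
      (((hC _).mul (hX 0)).mul ((hX 2).pow 2))) ((hC _).mul ((hX 2).pow 3)))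

lemma dehomogenize_polynomial : dehomogenize W.polynomial = W.toAffine.polynomial := by
  simp [dehomogenize, polynomial, Affine.polynomial]
  ring

lemma not_X_two_dvd_polynomial [Nontrivial R] : ¬ X 2 ∣ W.polynomial := by
  rintro ⟨g, hg⟩
  simpa [eval_polynomial] using congrArg (MvPolynomial.eval ![1, 0, 0]) hg

theorem polynomial_dvd_of_dvd_dehomogenize [IsDomain R] {f : MvPolynomial (Fin 3) R} {n : ℕ}
    (hf : f.IsHomogeneous n) (h : W.toAffine.polynomial ∣ dehomogenize f) :
    W.polynomial ∣ f := by
  obtain ⟨u, hu⟩ := h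
  obtain ⟨k, U, hU, rfl⟩ := exists_isHomogeneous_dehomogenize_eq u n
  have hWU : W.polynomial * U = X 2 ^ (k + 3) * f := by
    have h₁ := W.isHomogeneous_polynomial.mul hU
    have h₂ := (isHomogeneous_X_pow (2 : Fin 3) (k + 3)).mul hf
    rw [show 3 + (n + k) = k + 3 + n by ring] at h₁
    refine sub_eq_zero.mp (eq_zero_of_dehomogenize_eq_zero (h₁.sub h₂) ?_)
    simp [dehomogenize_polynomial, hu]
  obtain ⟨U', rfl⟩ :=
    X_prime.pow_dvd_of_dvd_mul_left (k + 3) W.not_X_two_dvd_polynomial ⟨f, hWU⟩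
  exact ⟨U', mul_left_cancel₀ (pow_ne_zero (k + 3) (X_ne_zero 2)) (by rw [← hWU]; ring)⟩

end Ring

section Field

variable {F : Type*} [Field F] {W : WeierstrassCurve.Projective F}

lemma Point.exists_point_eq_of_ne_zero {P : W.Point} (hP : P ≠ 0) :
    ∃ x y : F, W.toAffine.Nonsingular x y ∧ P.point = ⟦![x, y, 1]⟧ := by
  rcases P with @⟨⟨v⟩, hv⟩
  by_cases hvz : v 2 = 0
  · exact absurd (Point.ext (Quotient.sound (equiv_zero_of_Z_eq_zero hv hvz))) hP
  · exact ⟨_, _, (nonsingular_of_Z_ne_zero hvz).mp hv,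
      Quotient.sound (equiv_some_of_Z_ne_zero hvz)⟩

lemma Point.exists_finset_affine [DecidableEq F] {ι : Type*} {P : ι → W.Point} {s : Finset ι}
    (hP : Set.InjOn P s) (hs : ∀ i ∈ s, P i ≠ 0) :
    ∃ S : Finset (F × F), #S = #s ∧ ∀ r ∈ S,
      W.toAffine.Nonsingular r.1 r.2 ∧ ∃ i, (P i).point = ⟦![r.1, r.2, 1]⟧ := by
  choose! x y hxy hPxy using fun i (hi : P i ≠ 0) => exists_point_eq_of_ne_zero hi
  refine ⟨s.image fun i => (x i, y i), card_image_of_injOn fun i hi j hj hij =>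
    hP hi hj (Point.ext ?_), fun r hr => ?_⟩
  · simp only [Prod.mk.injEq] at hij
    rw [hPxy i (hs i hi), hPxy j (hs j hj), hij.1, hij.2]
  · obtain ⟨i, hi, rfl⟩ := mem_image.mp hr
    exact ⟨hxy i (hs i hi), i, hPxy i (hs i hi)⟩

end Field

end WeierstrassCurve.Projective

open WeierstrassCurve WeierstrassCurve.Projective

theorem weierstrass_dvd_of_vanishing_at_many_points_general
    (F : Type*) [Field F] (W : WeierstrassCurve.Projective F)
    (n' l : ℕ) (hl : 1 ≤ l)
    (P : Fin (3 * n' + l) → W.Point) (hP : Function.Injective P)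
    (f : MvPolynomial (Fin 3) F) (hf : f.IsHomogeneous n')
    (hvan : ∀ i, ∀ x : Fin 3 → F, (P i).point = ⟦x⟧ → MvPolynomial.eval x f = 0) :
    W.polynomial ∣ f := by
  classical
  obtain ⟨s, hs, hweight⟩ : ∃ s : Finset (Fin (3 * n' + l)),
      (∀ i ∈ s, P i ≠ 0) ∧ ∀ d ∈ f.support, 2 * d 0 + 3 * d 1 < #s := by
    by_cases hO : ∃ i, P i = 0
    · obtain ⟨i₀, hi₀⟩ := hO
      refine ⟨univ.erase i₀, fun i hi h => (mem_erase.mp hi).1 (hP (h.trans hi₀.symm)),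
        fun d hd => ?_⟩
      have := hf.two_mul_add_three_mul_lt (hvan i₀ _ (hi₀ ▸ Point.zero_point)) hd
      rw [card_erase_of_mem (mem_univ _), card_univ, Fintype.card_fin]
      omega
    · refine ⟨univ, fun i _ h => hO ⟨i, h⟩, fun d hd => ?_⟩
      have := hf.two_mul_add_three_mul_le hd
      rw [card_univ, Fintype.card_fin]
      omega
  obtain ⟨S, hSs, hS⟩ := Point.exists_finset_affine hP.injOn hs
  refine W.polynomial_dvd_of_dvd_dehomogenize hf (AdjoinRoot.mk_eq_zero.mp
    (Affine.CoordinateRing.mk_eq_zero_of_degree_norm_lt_card (S := S) (fun r hr => ?_)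
      (Affine.CoordinateRing.degree_norm_mk_dehomogenize_lt (hSs ▸ hweight))))
  obtain ⟨hr, i, hi⟩ := hS r hr
  exact ⟨hr.1, (MvPolynomial.evalEval_dehomogenize f _ _).trans (hvan i _ hi)⟩

/-- Let `W` be an elliptic curve over a field `F` with projective Weierstrass polynomial
`F_W`, let `n', l ≥ 1`, and let `P_1, …, P_{3n'+l}` be pairwise distinct points of `W(F)`.
If `f` is a nonzero homogeneous polynomial of degree `n'` vanishing at all of the points
`P_1, …, P_{3n'+l}`, then `F_W` divides `f`. -/
theorem weierstrass_dvd_of_vanishing_at_many_points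
    (F : Type*) [Field F] (W : WeierstrassCurve.Projective F) [W.IsElliptic]
    (n' l : ℕ) (hn' : 0 < n') (hl : 1 ≤ l)
    (P : Fin (3 * n' + l) → W.Point) (hP : Function.Injective P)
    (f : MvPolynomial (Fin 3) F) (hf0 : f ≠ 0) (hf : f.IsHomogeneous n')
    (hvan : ∀ i, ∀ x : Fin 3 → F, (P i).point = ⟦x⟧ → MvPolynomial.eval x f = 0) :
    W.polynomial ∣ f :=
  weierstrass_dvd_of_vanishing_at_many_points_general F W n' l hl P hP f hf hvan
end

section
/- Let W be an elliptic curve over a field F given by a smooth Weierstrass equation with projective Weierstrass polynomial F_W ∈ F[X,Y,Z], let n' be a positive integer, and let P_1, …, P_{3n'} be pairwise distinct points of W(F) with fixed representatives in F^3. Form the 3n' × ((n'+1)(n'+2)/2) evaluation matrix M whose (i,m) entry is the value at the representative of P_i of the m-th degree-n' monomial in X, Y, Z (under a fixed ordering of the monomials). Then the following are equivalent: (a) the left kernel of M is zero (equivalently, the rows of M are linearly independent over F); (b) every homogeneous polynomial of degree n' in F[X,Y,Z] that vanishes at all of the points P_1, …, P_{3n'} is divisible by F_W. -/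
open WeierstrassCurve WeierstrassCurve.Projective

namespace LeftKernelAux

open MvPolynomial

variable {F : Type*} [Field F]

lemma degree_eq_sum (m : Fin 3 →₀ ℕ) : m.degree = ∑ t, m t :=
  Finset.sum_subset (Finset.subset_univ _)
    (fun t _ ht => Finsupp.notMem_support_iff.mp ht)

/-- The linear map sending a vector of coefficients (indexed by the degree-`d` monomials
via the equivalence `e`) to the corresponding homogeneous polynomial of degree `d`. -/
noncomputable def coeffMap (d : ℕ) {κ : Type*} [Fintype κ]
    (e : κ ≃ {m : Fin 3 →₀ ℕ // ∑ t, m t = d}) :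
    (κ → F) →ₗ[F] MvPolynomial (Fin 3) F :=
  ∑ j : κ, (MvPolynomial.monomial ((e j : Fin 3 →₀ ℕ))).comp (LinearMap.proj j)

lemma coeffMap_apply (d : ℕ) {κ : Type*} [Fintype κ]
    (e : κ ≃ {m : Fin 3 →₀ ℕ // ∑ t, m t = d}) (c : κ → F) :
    coeffMap d e c = ∑ j : κ, monomial ((e j : Fin 3 →₀ ℕ)) (c j) := by
  simp [coeffMap]

lemma coeff_coeffMap (d : ℕ) {κ : Type*} [Fintype κ]
    (e : κ ≃ {m : Fin 3 →₀ ℕ // ∑ t, m t = d}) (c : κ → F) (j : κ) :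
    coeff ((e j : Fin 3 →₀ ℕ)) (coeffMap d e c) = c j := by
  classical
  rw [coeffMap_apply, coeff_sum, Finset.sum_eq_single j]
  · simp [coeff_monomial]
  · intro j' _ hne
    rw [coeff_monomial, if_neg]
    exact fun h => hne (e.injective (Subtype.val_injective h))
  · simp

lemma coeffMap_injective (d : ℕ) {κ : Type*} [Fintype κ]
    (e : κ ≃ {m : Fin 3 →₀ ℕ // ∑ t, m t = d}) :
    Function.Injective (coeffMap (F := F) d e) := by
  intro a b h
  funext j
  have := congrArg (coeff ((e j : Fin 3 →₀ ℕ))) h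
  simpa [coeff_coeffMap] using this

lemma coeffMap_isHomogeneous (d : ℕ) {κ : Type*} [Fintype κ]
    (e : κ ≃ {m : Fin 3 →₀ ℕ // ∑ t, m t = d}) (c : κ → F) :
    (coeffMap d e c).IsHomogeneous d := by
  rw [coeffMap_apply]
  exact IsHomogeneous.sum _ _ _ fun j _ =>
    isHomogeneous_monomial _ (by rw [degree_eq_sum]; exact (e j).2)

lemma coeffMap_eq_of_isHomogeneous (d : ℕ) {κ : Type*} [Fintype κ]
    (e : κ ≃ {m : Fin 3 →₀ ℕ // ∑ t, m t = d}) (f : MvPolynomial (Fin 3) F)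
    (hf : f.IsHomogeneous d) :
    coeffMap d e (fun j => coeff ((e j : Fin 3 →₀ ℕ)) f) = f := by
  classical
  ext m
  rw [coeffMap_apply, coeff_sum]
  by_cases hm : ∑ t, m t = d
  · rw [Finset.sum_eq_single (e.symm ⟨m, hm⟩)]
    · simp [coeff_monomial]
    · intro j' _ hne
      rw [coeff_monomial, if_neg]
      intro h
      have : e j' = ⟨m, hm⟩ := Subtype.ext h
      exact hne (by rw [← this, Equiv.symm_apply_apply])
    · simp
  · rw [hf.coeff_eq_zero (by rw [degree_eq_sum]; exact hm)]
    apply Finset.sum_eq_zero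
    intro j _
    rw [coeff_monomial, if_neg]
    exact fun h => hm (h ▸ (e j).2)

lemma eval_coeffMap (d : ℕ) {κ : Type*} [Fintype κ]
    (e : κ ≃ {m : Fin 3 →₀ ℕ // ∑ t, m t = d}) (c : κ → F) (x : Fin 3 → F) :
    eval x (coeffMap d e c) = ∑ j, c j * ∏ t, x t ^ ((e j : Fin 3 →₀ ℕ)) t := by
  rw [coeffMap_apply, map_sum]
  refine Finset.sum_congr rfl fun j _ => ?_
  rw [eval_monomial, Finsupp.prod_pow]

lemma sum_count (s : Multiset (Fin 3)) : ∑ t, Multiset.toFinsupp s t = Multiset.card s := by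
  simp only [Multiset.toFinsupp_apply]
  rw [← Multiset.toFinset_sum_count_eq]
  exact (Finset.sum_subset (Finset.subset_univ _) fun t _ ht =>
    Multiset.count_eq_zero.mpr (fun hmem => ht (Multiset.mem_toFinset.mpr hmem))).symm

/-- Degree-`d` monomials in three variables biject with `Sym (Fin 3) d`. -/
noncomputable def monEquivSym (d : ℕ) :
    {m : Fin 3 →₀ ℕ // ∑ t, m t = d} ≃ Sym (Fin 3) d :=
  (Equiv.subtypeEquiv (Multiset.toFinsupp (α := Fin 3)).toEquiv
    (fun s => by
      constructor
      · intro h; rw [AddEquiv.toEquiv_eq_coe, EquivLike.coe_coe]; rw [sum_count]; exact h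
      · intro h; rw [← sum_count s]; simpa using h) :
    {s : Multiset (Fin 3) // Multiset.card s = d} ≃ {m : Fin 3 →₀ ℕ // ∑ t, m t = d}).symm

noncomputable def monFintype (d : ℕ) : Fintype {m : Fin 3 →₀ ℕ // ∑ t, m t = d} :=
  Fintype.ofEquiv _ (monEquivSym d).symm

lemma card_mon (d : ℕ) [Fintype {m : Fin 3 →₀ ℕ // ∑ t, m t = d}] :
    Fintype.card {m : Fin 3 →₀ ℕ // ∑ t, m t = d} = (d + 1) * (d + 2) / 2 := by
  rw [Fintype.card_congr (monEquivSym d), Sym.card_sym_eq_choose]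
  rw [Fintype.card_fin]
  have h1 : 3 + d - 1 = d + 2 := by omega
  rw [h1]
  have h2 := Nat.choose_symm (show 2 ≤ d + 2 by omega)
  have h3 : d + 2 - 2 = d := by omega
  rw [h3] at h2
  rw [h2, Nat.choose_two_right]
  have h4 : d + 2 - 1 = d + 1 := by omega
  rw [h4, Nat.mul_comm]

lemma polynomial_isHomogeneous (W : WeierstrassCurve.Projective F) :
    W.polynomial.IsHomogeneous 3 := by
  rw [WeierstrassCurve.Projective.polynomial]
  apply IsHomogeneous.sub
  · apply IsHomogeneous.add
    apply IsHomogeneous.add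
    · exact (isHomogeneous_X_pow _ _).mul (isHomogeneous_X _ _)
    · exact (((isHomogeneous_C _ _).mul (isHomogeneous_X _ _)).mul
        (isHomogeneous_X _ _)).mul (isHomogeneous_X _ _)
    · exact ((isHomogeneous_C _ _).mul (isHomogeneous_X _ _)).mul (isHomogeneous_X_pow _ _)
  · apply IsHomogeneous.add
    apply IsHomogeneous.add
    apply IsHomogeneous.add
    · exact isHomogeneous_X_pow _ _
    · exact ((isHomogeneous_C _ _).mul (isHomogeneous_X_pow _ _)).mul (isHomogeneous_X _ _)
    · exact ((isHomogeneous_C _ _).mul (isHomogeneous_X _ _)).mul (isHomogeneous_X_pow _ _)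
    · exact (isHomogeneous_C _ _).mul (isHomogeneous_X_pow _ _)

lemma polynomial_ne_zero (W : WeierstrassCurve.Projective F) : W.polynomial ≠ 0 := by
  intro h
  have h1 := W.eval_polynomial ![1, 0, 0]
  rw [h] at h1
  simp at h1

lemma exists_isHomogeneous_cofactor {k n : ℕ} {p f : MvPolynomial (Fin 3) F}
    (hp : p.IsHomogeneous k) (hf : f.IsHomogeneous n) (hdvd : p ∣ f) :
    ∃ g : MvPolynomial (Fin 3) F, g.IsHomogeneous (n - k) ∧ f = p * g := by
  classical
  obtain ⟨g, rfl⟩ := hdvd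
  have h1 : homogeneousComponent n (p * g) = p * g := by
    rw [homogeneousComponent_of_mem ((mem_homogeneousSubmodule _ _).mpr hf), if_pos rfl]
  have h3 : p * g = ∑ i ∈ Finset.range (g.totalDegree + 1),
      if n = k + i then p * homogeneousComponent i g else 0 := by
    conv_lhs => rw [← h1]
    conv_lhs => rw [show p * g = ∑ i ∈ Finset.range (g.totalDegree + 1),
      p * homogeneousComponent i g by rw [← Finset.mul_sum, sum_homogeneousComponent]]
    rw [map_sum]
    refine Finset.sum_congr rfl fun i _ => ?_
    exact homogeneousComponent_of_mem ((mem_homogeneousSubmodule _ _).mpr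
      (hp.mul (homogeneousComponent_isHomogeneous i g)))
  by_cases hk : k ≤ n
  · have hcond : ∀ i : ℕ, (n = k + i) ↔ (i = n - k) := fun i => by omega
    by_cases hmem : n - k ∈ Finset.range (g.totalDegree + 1)
    · refine ⟨homogeneousComponent (n - k) g, homogeneousComponent_isHomogeneous _ _, ?_⟩
      rw [h3]
      simp_rw [hcond]
      rw [Finset.sum_ite_eq' _ (n - k) _, if_pos hmem]
    · refine ⟨0, isHomogeneous_zero _ _ _, ?_⟩
      rw [mul_zero, h3]
      apply Finset.sum_eq_zero
      intro i hi
      rw [if_neg]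
      intro hcon
      exact hmem (by rwa [(hcond i).mp hcon] at hi)
  · refine ⟨0, isHomogeneous_zero _ _ _, ?_⟩
    rw [mul_zero, h3]
    apply Finset.sum_eq_zero
    intro i _
    rw [if_neg]
    omega

end LeftKernelAux

open LeftKernelAux MvPolynomial

/-- Let `W` be an elliptic curve over `F` with projective Weierstrass polynomial `F_W`,
`n' ≥ 1`, and `P_1, …, P_{3n'}` pairwise distinct points of `W(F)` with fixed
representatives.  Let `M` be the `3n' × ((n'+1)(n'+2)/2)` matrix whose `(i, m)` entry is
the value of the `m`-th degree-`n'` monomial (in a fixed ordering) at the representative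
of `P_i`.  Then the left kernel of `M` is zero iff every homogeneous polynomial of degree
`n'` vanishing at all points `P_1, …, P_{3n'}` is divisible by `F_W`. -/
theorem left_kernel_zero_iff_vanishing_implies_dvd
    (F : Type*) [Field F] (W : WeierstrassCurve.Projective F) [W.IsElliptic]
    (n' : ℕ) (hn' : 0 < n')
    (P : Fin (3 * n') → W.Point) (hP : Function.Injective P)
    (rep : Fin (3 * n') → Fin 3 → F) (hrep : ∀ i, (P i).point = ⟦rep i⟧)
    (mons : Fin ((n' + 1) * (n' + 2) / 2) ≃ {m : Fin 3 →₀ ℕ // ∑ t, m t = n'})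
    (M : Matrix (Fin (3 * n')) (Fin ((n' + 1) * (n' + 2) / 2)) F)
    (hM : ∀ i j, M i j = ∏ t, rep i t ^ ((mons j : Fin 3 →₀ ℕ) t)) :
    (∀ v : Fin (3 * n') → F, Matrix.vecMul v M = 0 → v = 0) ↔
      ∀ f : MvPolynomial (Fin 3) F, f.IsHomogeneous n' →
        (∀ i, MvPolynomial.eval (rep i) f = 0) → W.polynomial ∣ f := by
  classical
  set φ := coeffMap (F := F) n' mons with hφdef
  letI instF : Fintype {m : Fin 3 →₀ ℕ // ∑ t, m t = n' - 3} := monFintype _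
  set φ' := coeffMap (F := F) (n' - 3)
    (Equiv.refl {m : Fin 3 →₀ ℕ // ∑ t, m t = n' - 3}) with hφ'def
  have hφinj : Function.Injective φ := coeffMap_injective n' mons
  have hφ'inj : Function.Injective φ' := coeffMap_injective (n' - 3) (Equiv.refl _)
  have hEval : ∀ (c : Fin ((n' + 1) * (n' + 2) / 2) → F) (i),
      MvPolynomial.eval (rep i) (φ c) = M.mulVec c i := by
    intro c i
    rw [hφdef, eval_coeffMap]
    simp only [Matrix.mulVec, dotProduct]
    exact Finset.sum_congr rfl fun j _ => by rw [hM i j, mul_comm]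
  have hEq : ∀ i, MvPolynomial.eval (rep i) W.polynomial = 0 := by
    intro i
    have h := (P i).nonsingular
    rw [hrep i] at h
    exact ((W.nonsingular_iff (rep i)).mp ((W.nonsingularLift_iff (rep i)).mp h)).1
  have hW3 := polynomial_isHomogeneous W
  have hW0 := polynomial_ne_zero W
  set K := LinearMap.ker M.mulVecLin with hK
  set T := Submodule.map (LinearMap.mulLeft F W.polynomial) (LinearMap.range φ') with hT
  set S := Submodule.comap φ T with hS
  have hSmem : ∀ c, c ∈ S ↔ ∃ c', φ c = W.polynomial * φ' c' := by
    intro c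
    constructor
    · intro hc
      obtain ⟨y, hy, hyeq⟩ := Submodule.mem_comap.mp hc
      obtain ⟨c', rfl⟩ := hy
      refine ⟨c', ?_⟩
      rw [← hyeq, LinearMap.mulLeft_apply]
    · rintro ⟨c', hc'⟩
      refine Submodule.mem_comap.mpr ⟨φ' c', ⟨c', rfl⟩, ?_⟩
      rw [LinearMap.mulLeft_apply, hc']
  have hSK : S ≤ K := by
    intro c hc
    obtain ⟨c', hc'⟩ := (hSmem c).mp hc
    rw [hK, LinearMap.mem_ker]
    have h0 : M.mulVec c = 0 := by
      funext i
      rw [← hEval c i, hc', map_mul, hEq i, zero_mul, Pi.zero_apply]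
    exact h0
  have hfinS : Module.finrank F S = (n' + 1) * (n' + 2) / 2 - 3 * n' := by
    by_cases h3 : 3 ≤ n'
    · have hhom : ∀ c', (W.polynomial * φ' c').IsHomogeneous n' := by
        intro c'
        have h := hW3.mul (coeffMap_isHomogeneous (F := F) (n' - 3) (Equiv.refl _) c')
        rwa [show 3 + (n' - 3) = n' by omega] at h
      have hTle : T ≤ LinearMap.range φ := by
        rintro p hp
        obtain ⟨y, hy, rfl⟩ := hp
        obtain ⟨c', rfl⟩ := hy
        refine ⟨_, coeffMap_eq_of_isHomogeneous n' mons _ ?_⟩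
        rw [LinearMap.mulLeft_apply]
        exact hhom c'
      have hmapS : Submodule.map φ S = T := by
        rw [hS, Submodule.map_comap_eq]
        exact inf_eq_right.mpr hTle
      have e1 : Module.finrank F S = Module.finrank F T := by
        rw [← hmapS]
        exact (Submodule.equivMapOfInjective φ hφinj S).finrank_eq
      have e2 : T = LinearMap.range ((LinearMap.mulLeft F W.polynomial).comp φ') := by
        rw [hT, LinearMap.range_comp]
      have hinj2 : Function.Injective ((LinearMap.mulLeft F W.polynomial).comp φ') := by
        intro a b hab
        apply hφ'inj
        simp only [LinearMap.comp_apply, LinearMap.mulLeft_apply] at hab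
        exact mul_left_cancel₀ hW0 hab
      have e3 : Module.finrank F T =
          Fintype.card {m : Fin 3 →₀ ℕ // ∑ t, m t = n' - 3} := by
        rw [e2, LinearMap.finrank_range_of_inj hinj2, Module.finrank_fintype_fun_eq_card]
      rw [e1, e3, card_mon]
      obtain ⟨b, rfl⟩ : ∃ b, n' = b + 3 := ⟨n' - 3, by omega⟩
      simp only [Nat.add_sub_cancel]
      obtain ⟨p, hp⟩ := (Nat.even_mul_succ_self (b + 1)).two_dvd
      obtain ⟨q, hq⟩ := (Nat.even_mul_succ_self (b + 3 + 1)).two_dvd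
      have hpq : (b + 3 + 1) * (b + 3 + 2) = (b + 1) * (b + 2) + 6 * (b + 3) := by ring
      rw [hp, hq] at hpq
      rw [show (b + 1) * (b + 1 + 1) = (b + 1) * (b + 2) from by ring] at hp
      rw [show (b + 3 + 1) * (b + 3 + 1 + 1) = (b + 3 + 1) * (b + 3 + 2) from by ring] at hq
      rw [hp, hq]
      omega
    · have hbot : S = ⊥ := by
        rw [Submodule.eq_bot_iff]
        intro c hc
        obtain ⟨c', hc'⟩ := (hSmem c).mp hc
        have h1 : (φ c).IsHomogeneous n' := by rw [hφdef]; exact coeffMap_isHomogeneous _ _ _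
        have h2 : (φ c).IsHomogeneous 3 := by
          rw [hc']
          have h := hW3.mul (coeffMap_isHomogeneous (F := F) (n' - 3) (Equiv.refl _) c')
          rwa [show 3 + (n' - 3) = 3 by omega] at h
        have hzero : φ c = 0 := by
          by_contra hne
          exact absurd (h1.inj_right h2 hne) (by omega)
        have h4 : φ c = φ 0 := by rw [hzero, map_zero]
        exact hφinj h4
      rw [hbot, finrank_bot]
      obtain rfl | rfl : n' = 1 ∨ n' = 2 := by omega
      · norm_num
      · norm_num
  have hRN : Module.finrank F (LinearMap.range M.mulVecLin) + Module.finrank F K =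
      (n' + 1) * (n' + 2) / 2 := by
    rw [hK, LinearMap.finrank_range_add_finrank_ker,
      Module.finrank_fintype_fun_eq_card, Fintype.card_fin]
  have hRNT : Module.finrank F (LinearMap.range (M.transpose).mulVecLin) +
      Module.finrank F (LinearMap.ker (M.transpose).mulVecLin) = 3 * n' := by
    rw [LinearMap.finrank_range_add_finrank_ker,
      Module.finrank_fintype_fun_eq_card, Fintype.card_fin]
  constructor
  · intro ha f hf hvan
    have hker : LinearMap.ker (M.transpose).mulVecLin = ⊥ := by
      rw [Submodule.eq_bot_iff]
      intro v hv
      apply ha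
      rw [← Matrix.mulVec_transpose]
      exact LinearMap.mem_ker.mp hv
    have hrkT : Module.finrank F (LinearMap.range (M.transpose).mulVecLin) = 3 * n' := by
      rw [hker, finrank_bot] at hRNT
      omega
    have hrk : Module.finrank F (LinearMap.range M.mulVecLin) = 3 * n' := by
      have h1 : (M.transpose).rank = M.rank := Matrix.rank_transpose M
      have h2 : (M.transpose).rank = Module.finrank F (LinearMap.range (M.transpose).mulVecLin) := rfl
      have h3 : M.rank = Module.finrank F (LinearMap.range M.mulVecLin) := rfl
      omega
    have hkerdim : Module.finrank F K = (n' + 1) * (n' + 2) / 2 - 3 * n' := by omega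
    have hSKeq : S = K :=
      Submodule.eq_of_le_of_finrank_le hSK (le_of_eq (by rw [hkerdim, hfinS]))
    have hfc : φ (fun j => coeff ((mons j : Fin 3 →₀ ℕ)) f) = f := by
      rw [hφdef]; exact coeffMap_eq_of_isHomogeneous n' mons f hf
    have hcK : (fun j => coeff ((mons j : Fin 3 →₀ ℕ)) f) ∈ K := by
      rw [hK, LinearMap.mem_ker]
      have h0 : M.mulVec (fun j => coeff ((mons j : Fin 3 →₀ ℕ)) f) = 0 := by
        funext i
        rw [← hEval _ i, hfc, Pi.zero_apply]
        exact hvan i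
      exact h0
    rw [← hSKeq] at hcK
    obtain ⟨c', hc'⟩ := (hSmem _).mp hcK
    exact ⟨φ' c', by rw [← hfc, hc']⟩
  · intro hb v hv
    have hKS : K ≤ S := by
      intro c hc
      have hzero : ∀ i, MvPolynomial.eval (rep i) (φ c) = 0 := by
        intro i
        rw [hEval c i]
        have h0 : M.mulVec c = 0 := LinearMap.mem_ker.mp hc
        rw [h0, Pi.zero_apply]
      have hhomc : (φ c).IsHomogeneous n' := by
        rw [hφdef]; exact coeffMap_isHomogeneous _ _ _
      have hdvd := hb (φ c) hhomc hzero
      obtain ⟨g, hg, hfg⟩ := exists_isHomogeneous_cofactor hW3 hhomc hdvd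
      refine (hSmem c).mpr ⟨fun m => coeff (m : Fin 3 →₀ ℕ) g, ?_⟩
      rw [hfg, hφ'def]
      exact congrArg (W.polynomial * ·)
        ((coeffMap_eq_of_isHomogeneous _ (Equiv.refl _) g hg).symm)
    have hkerle : Module.finrank F K ≤ (n' + 1) * (n' + 2) / 2 - 3 * n' :=
      hfinS ▸ Submodule.finrank_mono hKS
    have hrk_le : Module.finrank F (LinearMap.range M.mulVecLin) ≤ 3 * n' := by
      have h1 : M.rank ≤ Fintype.card (Fin (3 * n')) := Matrix.rank_le_card_height M
      have h3 : M.rank = Module.finrank F (LinearMap.range M.mulVecLin) := rfl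
      rw [Fintype.card_fin] at h1
      omega
    have hge : 3 * n' ≤ (n' + 1) * (n' + 2) / 2 := by
      have heq : (n' + 1) * (n' + 2) = n' * n' + 3 * n' + 2 := by ring
      rcases le_or_gt 3 n' with h | h
      · have h2 : 3 * n' ≤ n' * n' := Nat.mul_le_mul_right n' h
        omega
      · obtain rfl | rfl : n' = 1 ∨ n' = 2 := by omega
        · norm_num
        · norm_num
    have hrank_eq : Module.finrank F (LinearMap.range M.mulVecLin) = 3 * n' := by omega
    have hkerT : Module.finrank F (LinearMap.ker (M.transpose).mulVecLin) = 0 := by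
      have h1 : (M.transpose).rank = M.rank := Matrix.rank_transpose M
      have h2 : (M.transpose).rank = Module.finrank F (LinearMap.range (M.transpose).mulVecLin) := rfl
      have h3 : M.rank = Module.finrank F (LinearMap.range M.mulVecLin) := rfl
      omega
    have hbotT : LinearMap.ker (M.transpose).mulVecLin = ⊥ := Submodule.finrank_eq_zero.mp hkerT
    have hvmem : v ∈ LinearMap.ker (M.transpose).mulVecLin := by
      rw [LinearMap.mem_ker]
      show M.transpose.mulVec v = 0
      rw [Matrix.mulVec_transpose]
      exact hv
    rw [hbotT] at hvmem
    exact hvmem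
end

section
/- Let W be an elliptic curve over a field F given by a smooth Weierstrass equation with projective Weierstrass polynomial F_W ∈ F[X,Y,Z], let n' and l be positive integers with l ≥ 1, and let P_1, …, P_{3n'+l} be pairwise distinct points of W(F) with fixed representatives in F^3. Form the (3n'+l) × ((n'+1)(n'+2)/2) evaluation matrix M whose (i,m) entry is the value at the representative of P_i of the m-th degree-n' monomial in X, Y, Z. Then the following are equivalent: (a) there exists a nonzero vector v in the left kernel of M having at least l coordinates equal to zero; (b) there exist a subset S ⊆ {1, …, 3n'+l} with |S| = 3n' and a nonzero homogeneous polynomial C ∈ F[X,Y,Z] of degree n', not divisible by F_W, such that C vanishes at P_i for every i ∈ S. -/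
open WeierstrassCurve WeierstrassCurve.Projective

open Module Submodule MvPolynomial

/-- Dependence of `dim`-many functionals is equivalent to a common nonzero zero. -/
lemma aux_dep_iff_common_zero {F : Type*} [Field F] {Q : Type*} [AddCommGroup Q] [Module F Q]
    [FiniteDimensional F Q] {ι : Type*} [Fintype ι] (ψ : ι → Module.Dual F Q)
    (hcard : Fintype.card ι = Module.finrank F Q) :
    (∃ g : ι → F, (∃ i, g i ≠ 0) ∧ ∑ i, g i • ψ i = 0) ↔
      ∃ q : Q, q ≠ 0 ∧ ∀ i, ψ i q = 0 := by
  have hcard' : Fintype.card ι = Module.finrank F (Module.Dual F Q) := by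
    rw [Subspace.dual_finrank_eq]; exact hcard
  constructor
  · rintro ⟨g, hg, hsum⟩
    have hdep : ¬ LinearIndependent F ψ := Fintype.not_linearIndependent_iff.mpr ⟨g, hsum, hg⟩
    have hlt : span F (Set.range ψ) < ⊤ := by
      rcases lt_or_eq_of_le (le_top : span F (Set.range ψ) ≤ ⊤) with h | h
      · exact h
      · exact absurd (linearIndependent_of_top_le_span_of_card_eq_finrank h.ge hcard') hdep
    obtain ⟨ξ, hξ, hmap⟩ := Submodule.exists_dual_map_eq_bot_of_lt_top hlt inferInstance
    refine ⟨(Module.evalEquiv F Q).symm ξ, ?_, fun i => ?_⟩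
    · simpa using hξ
    · have h1 : ψ i ((Module.evalEquiv F Q).symm ξ) = ξ (ψ i) :=
        Module.apply_evalEquiv_symm_apply F Q (ψ i) ξ
      have h2 : ξ (ψ i) ∈ (span F (Set.range ψ)).map ξ :=
        Submodule.mem_map_of_mem (subset_span ⟨i, rfl⟩)
      rw [hmap, Submodule.mem_bot] at h2
      rw [h1, h2]
  · rintro ⟨q, hq, hψ⟩
    by_contra hcon
    have hindep : LinearIndependent F ψ := by
      by_contra hdep
      obtain ⟨g, hsum, hg⟩ := Fintype.not_linearIndependent_iff.mp hdep
      exact hcon ⟨g, hg, hsum⟩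
    have hspan := hindep.span_eq_top_of_card_eq_finrank' hcard'
    have : ∀ f : Module.Dual F Q, f q = 0 := by
      intro f
      have hf : f ∈ span F (Set.range ψ) := hspan ▸ Submodule.mem_top
      induction hf using Submodule.span_induction with
      | mem f hf => obtain ⟨i, rfl⟩ := hf; exact hψ i
      | zero => simp
      | add f g _ _ hf hg => simp [hf, hg]
      | smul a f _ hf => simp [hf]
    exact hq ((Module.forall_dual_apply_eq_zero_iff F q).mp this)

/-- counting degree-`d` monomials in three variables -/
lemma aux_card_monomials (d : ℕ) :
    ∃ _ : Fintype {m : Fin 3 →₀ ℕ // ∑ t, m t = d},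
      Fintype.card {m : Fin 3 →₀ ℕ // ∑ t, m t = d} = (d + 1) * (d + 2) / 2 := by
  have hsum : ∀ m : Fin 3 →₀ ℕ, Multiset.card (Finsupp.toMultiset m) = ∑ t, m t := by
    intro m
    rw [Finsupp.card_toMultiset, Finsupp.sum_fintype _ _ (fun i => rfl)]
    rfl
  let e : {m : Fin 3 →₀ ℕ // ∑ t, m t = d} ≃ Sym (Fin 3) d :=
    { toFun := fun m => ⟨Finsupp.toMultiset m.1, by rw [hsum]; exact m.2⟩
      invFun := fun s => ⟨Multiset.toFinsupp s.1, by
        rw [← hsum (Multiset.toFinsupp s.1)]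
        simp only [Multiset.toFinsupp_toMultiset]
        exact s.2⟩
      left_inv := fun m => Subtype.ext (by simp)
      right_inv := fun s => Subtype.ext (by simp) }
  haveI : Fintype {m : Fin 3 →₀ ℕ // ∑ t, m t = d} := Fintype.ofEquiv _ e.symm
  refine ⟨inferInstance, ?_⟩
  rw [Fintype.card_congr e, Sym.card_sym_eq_choose]
  have h1 : (Fintype.card (Fin 3) + d - 1) = d + 2 := by simp; omega
  rw [h1]
  have h2 : (d + 2).choose d = (d + 2).choose 2 := by
    rw [← Nat.choose_symm (by omega : d ≤ d + 2)]
    congr 1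
    omega
  rw [h2, Nat.choose_two_right]
  have h3 : d + 2 - 1 = d + 1 := by omega
  rw [h3, Nat.mul_comm]

example : True := trivial

lemma aux_degree_eq_sum (m : Fin 3 →₀ ℕ) : m.degree = ∑ t, m t := by
  rw [Finsupp.degree]
  exact Finset.sum_subset (Finset.subset_univ _)
    (fun t _ ht => Finsupp.notMem_support_iff.mp ht)

/-- reconstruction of a homogeneous polynomial from its coefficients -/
lemma aux_recon {F : Type*} [Field F] {d D : ℕ} (e : Fin D ≃ {m : Fin 3 →₀ ℕ // ∑ t, m t = d})
    {C : MvPolynomial (Fin 3) F} (hC : C.IsHomogeneous d) :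
    ∑ j, MvPolynomial.monomial (e j : Fin 3 →₀ ℕ) (MvPolynomial.coeff (e j) C) = C := by
  classical
  ext m
  rw [MvPolynomial.coeff_sum]
  simp only [MvPolynomial.coeff_monomial]
  by_cases h : ∑ t, m t = d
  · rw [Finset.sum_eq_single (e.symm ⟨m, h⟩)]
    · simp
    · intro j _ hne
      simp only [ite_eq_right_iff]
      intro hsm
      exact absurd ((Equiv.eq_symm_apply e).mpr (Subtype.ext hsm)) hne
    · intro habs
      exact absurd (Finset.mem_univ _) habs
  · rw [Finset.sum_eq_zero, eq_comm]
    · exact hC.coeff_eq_zero (by rwa [aux_degree_eq_sum])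
    · intro j _
      simp only [ite_eq_right_iff]
      intro hsm
      exact absurd (hsm ▸ (e j).2) h

/-- factoring a homogeneous polynomial divisible by a homogeneous cubic -/
lemma aux_homog_factor {F : Type*} [Field F] {A C : MvPolynomial (Fin 3) F} {n : ℕ}
    (hA : A.IsHomogeneous 3) (hC : C.IsHomogeneous n) (hdvd : A ∣ C) :
    ∃ D : MvPolynomial (Fin 3) F, D.IsHomogeneous (n - 3) ∧ C = A * D ∧ (n < 3 → C = 0) := by
  classical
  obtain ⟨B, hB⟩ := hdvd
  have key : C = ∑ k ∈ Finset.range (B.totalDegree + 1),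
      if n = 3 + k then A * MvPolynomial.homogeneousComponent k B else 0 := by
    have h1 : MvPolynomial.homogeneousComponent n C = C := by
      rw [MvPolynomial.homogeneousComponent_of_mem
        ((MvPolynomial.mem_homogeneousSubmodule _ _).mpr hC), if_pos rfl]
    conv_lhs => rw [← h1, hB, ← MvPolynomial.sum_homogeneousComponent B, Finset.mul_sum,
      map_sum]
    refine Finset.sum_congr rfl (fun k _ => ?_)
    rw [MvPolynomial.homogeneousComponent_of_mem
      ((MvPolynomial.mem_homogeneousSubmodule _ _).mpr
        (hA.mul (MvPolynomial.homogeneousComponent_isHomogeneous k B)))]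
  by_cases hn : n < 3
  · have hC0 : C = 0 := by
      rw [key, Finset.sum_eq_zero]
      intro k _
      rw [if_neg (by omega)]
    exact ⟨0, MvPolynomial.isHomogeneous_zero _ _ _, by rw [hC0, mul_zero], fun _ => hC0⟩
  · push_neg at hn
    refine ⟨MvPolynomial.homogeneousComponent (n - 3) B,
      MvPolynomial.homogeneousComponent_isHomogeneous _ _, ?_, fun h => absurd h (by omega)⟩
    rw [key]
    have h2 : ∀ k ∈ Finset.range (B.totalDegree + 1),
        (if n = 3 + k then A * MvPolynomial.homogeneousComponent k B else 0) =
        (if k = n - 3 then A * MvPolynomial.homogeneousComponent k B else 0) := by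
      intro k _
      congr 1
      simp only [eq_iff_iff]
      omega
    rw [Finset.sum_congr rfl h2, Finset.sum_ite_eq' (Finset.range (B.totalDegree + 1))]
    by_cases h3 : n - 3 ∈ Finset.range (B.totalDegree + 1)
    · rw [if_pos h3]
    · rw [if_neg h3]
      rw [MvPolynomial.homogeneousComponent_eq_zero _ B (by
        simp only [Finset.mem_range] at h3; omega), mul_zero]

lemma aux_polyW_homog {F : Type*} [Field F] (W : WeierstrassCurve.Projective F) :
    W.polynomial.IsHomogeneous 3 := by
  have hC : ∀ (a : F) {φ : MvPolynomial (Fin 3) F} {n : ℕ}, φ.IsHomogeneous n →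
      (MvPolynomial.C a * φ).IsHomogeneous n := by
    intro a φ n hφ
    simpa using (MvPolynomial.isHomogeneous_C (Fin 3) a).mul hφ
  have hX : ∀ i : Fin 3, (MvPolynomial.X i : MvPolynomial (Fin 3) F).IsHomogeneous 1 :=
    fun i => MvPolynomial.isHomogeneous_X F i
  rw [WeierstrassCurve.Projective.polynomial]
  have h1 : ((MvPolynomial.X 1 : MvPolynomial (Fin 3) F) ^ 2 *
      MvPolynomial.X 2).IsHomogeneous 3 := by
    simpa using ((hX 1).pow 2).mul (hX 2)
  have h2 : ((MvPolynomial.X 0 : MvPolynomial (Fin 3) F) *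
      MvPolynomial.X 1 * MvPolynomial.X 2).IsHomogeneous 3 := by
    simpa using ((hX 0).mul (hX 1)).mul (hX 2)
  have h3 : ((MvPolynomial.X 1 : MvPolynomial (Fin 3) F) *
      MvPolynomial.X 2 ^ 2).IsHomogeneous 3 := by
    simpa using (hX 1).mul ((hX 2).pow 2)
  have h4 : ((MvPolynomial.X 0 : MvPolynomial (Fin 3) F) ^ 3).IsHomogeneous 3 := by
    simpa using (hX 0).pow 3
  have h5 : ((MvPolynomial.X 0 : MvPolynomial (Fin 3) F) ^ 2 *
      MvPolynomial.X 2).IsHomogeneous 3 := by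
    simpa using ((hX 0).pow 2).mul (hX 2)
  have h6 : ((MvPolynomial.X 0 : MvPolynomial (Fin 3) F) *
      MvPolynomial.X 2 ^ 2).IsHomogeneous 3 := by
    simpa using (hX 0).mul ((hX 2).pow 2)
  have h7 : ((MvPolynomial.X 2 : MvPolynomial (Fin 3) F) ^ 3).IsHomogeneous 3 := by
    simpa using (hX 2).pow 3
  refine MvPolynomial.IsHomogeneous.sub (MvPolynomial.IsHomogeneous.add
    (MvPolynomial.IsHomogeneous.add h1 ?_) ?_) (MvPolynomial.IsHomogeneous.add
    (MvPolynomial.IsHomogeneous.add (MvPolynomial.IsHomogeneous.add h4 ?_) ?_) ?_)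
  · rw [mul_assoc, mul_assoc]
    exact hC W.a₁ (by simpa using (hX 0).mul ((hX 1).mul (hX 2)))
  · rw [mul_assoc]
    exact hC W.a₃ h3
  · rw [mul_assoc]
    exact hC W.a₂ h5
  · rw [mul_assoc]
    exact hC W.a₄ h6
  · exact hC W.a₆ h7

lemma aux_polyW_ne_zero {F : Type*} [Field F] (W : WeierstrassCurve.Projective F) :
    W.polynomial ≠ 0 := by
  intro h
  have := congrArg (MvPolynomial.aeval ![(Polynomial.X : Polynomial F), 0, 0]) h
  simp only [WeierstrassCurve.Projective.polynomial, map_sub, map_add, map_mul, map_pow,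
    MvPolynomial.aeval_X, MvPolynomial.aeval_C, map_zero] at this
  simp only [Matrix.cons_val_zero, Matrix.cons_val_one, Matrix.head_cons,
    Matrix.cons_val_two, Matrix.tail_cons] at this
  have h3 : (Polynomial.X : Polynomial F) ^ 3 = 0 := by
    simpa using this
  exact Polynomial.X_ne_zero ((pow_eq_zero_iff (three_ne_zero)).mp h3)

/-- Let `W` be an elliptic curve over `F` with projective Weierstrass polynomial `F_W`,
`n', l ≥ 1`, and `P_1, …, P_{3n'+l}` pairwise distinct points of `W(F)` with fixed
representatives.  Let `M` be the `(3n'+l) × ((n'+1)(n'+2)/2)` evaluation matrix whose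
`(i, m)` entry is the value of the `m`-th degree-`n'` monomial (in a fixed ordering) at
the representative of `P_i`.  Then the left kernel of `M` contains a nonzero vector with
at least `l` zero coordinates iff there are a subset `S` of the indices of size `3n'` and
a nonzero homogeneous polynomial `C` of degree `n'` not divisible by `F_W` vanishing at
`P_i` for every `i ∈ S`. -/
theorem left_kernel_vector_with_l_zeros_iff
    (F : Type*) [Field F] (W : WeierstrassCurve.Projective F) [W.IsElliptic]
    (n' l : ℕ) (hn' : 0 < n') (hl : 1 ≤ l)
    (P : Fin (3 * n' + l) → W.Point) (hP : Function.Injective P)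
    (rep : Fin (3 * n' + l) → Fin 3 → F) (hrep : ∀ i, (P i).point = ⟦rep i⟧)
    (mons : Fin ((n' + 1) * (n' + 2) / 2) ≃ {m : Fin 3 →₀ ℕ // ∑ t, m t = n'})
    (M : Matrix (Fin (3 * n' + l)) (Fin ((n' + 1) * (n' + 2) / 2)) F)
    (hM : ∀ i j, M i j = ∏ t, rep i t ^ ((mons j : Fin 3 →₀ ℕ) t)) :
    (∃ v : Fin (3 * n' + l) → F, v ≠ 0 ∧ Matrix.vecMul v M = 0 ∧
        ∃ Z : Finset (Fin (3 * n' + l)), l ≤ Z.card ∧ ∀ i ∈ Z, v i = 0) ↔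
      ∃ S : Finset (Fin (3 * n' + l)), S.card = 3 * n' ∧
        ∃ C : MvPolynomial (Fin 3) F, C ≠ 0 ∧ C.IsHomogeneous n' ∧ ¬ W.polynomial ∣ C ∧
          ∀ i ∈ S, MvPolynomial.eval (rep i) C = 0 := by
  classical
  -- the linear map sending a coefficient vector to the corresponding homogeneous polynomial
  let Φ : (Fin ((n' + 1) * (n' + 2) / 2) → F) →ₗ[F] MvPolynomial (Fin 3) F :=
    ∑ j, (MvPolynomial.monomial (R := F) (mons j : Fin 3 →₀ ℕ)).comp (LinearMap.proj j)
  have hΦapply : ∀ c, Φ c = ∑ j, MvPolynomial.monomial (mons j : Fin 3 →₀ ℕ) (c j) := by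
    intro c
    simp [Φ, LinearMap.sum_apply]
  have hΦcoeff : ∀ c j, MvPolynomial.coeff (mons j : Fin 3 →₀ ℕ) (Φ c) = c j := by
    intro c j
    rw [hΦapply, MvPolynomial.coeff_sum]
    rw [Finset.sum_eq_single j]
    · simp [MvPolynomial.coeff_monomial]
    · intro b _ hb
      rw [MvPolynomial.coeff_monomial, if_neg]
      intro hb'
      exact hb (mons.injective (Subtype.ext hb'))
    · intro h
      exact absurd (Finset.mem_univ _) h
  have hΦhomog : ∀ c, (Φ c).IsHomogeneous n' := by
    intro c
    rw [hΦapply]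
    apply MvPolynomial.IsHomogeneous.sum
    intro j _
    exact MvPolynomial.isHomogeneous_monomial _ (by rw [aux_degree_eq_sum]; exact (mons j).2)
  have hΦrecon : ∀ C : MvPolynomial (Fin 3) F, C.IsHomogeneous n' →
      Φ (fun j => MvPolynomial.coeff ((mons j : Fin 3 →₀ ℕ)) C) = C := by
    intro C hC
    rw [hΦapply]
    exact aux_recon mons hC
  have heq : ∀ i, MvPolynomial.eval (rep i) W.polynomial = 0 := by
    intro i
    have h := (P i).nonsingular
    rw [hrep i] at h
    exact ((W.nonsingularLift_iff (rep i)).mp h).1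
  have hΦeval : ∀ c i, MvPolynomial.eval (rep i) (Φ c) = ∑ j, M i j * c j := by
    intro c i
    rw [hΦapply, map_sum]
    refine Finset.sum_congr rfl fun j _ => ?_
    rw [MvPolynomial.eval_monomial, hM i j]
    rw [Finsupp.prod_fintype _ _ (fun t => pow_zero _)]
    ring
  -- the submodule of coefficient vectors of multiples of the Weierstrass polynomial
  set K : Submodule F (Fin ((n' + 1) * (n' + 2) / 2) → F) :=
    Submodule.comap Φ ((Ideal.span {W.polynomial}).restrictScalars F) with hK
  have hmemK : ∀ c, c ∈ K ↔ W.polynomial ∣ Φ c := by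
    intro c
    rw [hK]
    simp [Submodule.mem_comap, Ideal.mem_span_singleton]
  -- the quotient has dimension 3n'
  have hrank : Module.finrank F ((Fin ((n' + 1) * (n' + 2) / 2) → F) ⧸ K) = 3 * n' := by
    have htot := Submodule.finrank_quotient_add_finrank K
    have hV : Module.finrank F (Fin ((n' + 1) * (n' + 2) / 2) → F)
        = (n' + 1) * (n' + 2) / 2 := by
      rw [Module.finrank_pi, Fintype.card_fin]
    by_cases hn3 : n' < 3
    · have hKbot : K = ⊥ := by
        rw [Submodule.eq_bot_iff]
        intro c hc
        obtain ⟨Dq, hDhom, hCD, hzero⟩ :=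
          aux_homog_factor (aux_polyW_homog W) (hΦhomog c) ((hmemK c).mp hc)
        have h0 : Φ c = 0 := hzero hn3
        funext j
        rw [← hΦcoeff c j, h0]
        simp
      have hKrank : Module.finrank F K = 0 := by rw [hKbot]; exact finrank_bot F _
      have hNval : (n' + 1) * (n' + 2) / 2 = 3 * n' := by
        interval_cases n' <;> norm_num
      omega
    · push_neg at hn3
      obtain ⟨k, rfl⟩ : ∃ k, n' = k + 3 := ⟨n' - 3, by omega⟩
      obtain ⟨instD, hcardD⟩ := aux_card_monomials k
      let em : Fin ((k + 1) * (k + 2) / 2) ≃ {m : Fin 3 →₀ ℕ // ∑ t, m t = k} :=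
        (Fintype.equivFinOfCardEq hcardD).symm
      let Ψ : (Fin ((k + 1) * (k + 2) / 2) → F) →ₗ[F] MvPolynomial (Fin 3) F :=
        ∑ j, (MvPolynomial.monomial (R := F) (em j : Fin 3 →₀ ℕ)).comp (LinearMap.proj j)
      have hΨapply : ∀ d, Ψ d = ∑ j, MvPolynomial.monomial (em j : Fin 3 →₀ ℕ) (d j) := by
        intro d
        simp [Ψ, LinearMap.sum_apply]
      have hΨcoeff : ∀ d j, MvPolynomial.coeff (em j : Fin 3 →₀ ℕ) (Ψ d) = d j := by
        intro d j
        rw [hΨapply, MvPolynomial.coeff_sum]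
        rw [Finset.sum_eq_single j]
        · simp [MvPolynomial.coeff_monomial]
        · intro b _ hb
          rw [MvPolynomial.coeff_monomial, if_neg]
          intro hb'
          exact hb (em.injective (Subtype.ext hb'))
        · intro h
          exact absurd (Finset.mem_univ _) h
      have hΨrecon : ∀ D : MvPolynomial (Fin 3) F, D.IsHomogeneous k →
          Ψ (fun j => MvPolynomial.coeff ((em j : Fin 3 →₀ ℕ)) D) = D := by
        intro D hD
        rw [hΨapply]
        exact aux_recon em hD
      let μ : (Fin ((k + 1) * (k + 2) / 2) → F) →ₗ[F] (Fin ((k + 3 + 1) * (k + 3 + 2) / 2) → F) :=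
        LinearMap.pi (fun j => (MvPolynomial.lcoeff F (mons j : Fin 3 →₀ ℕ)).comp
          ((LinearMap.mulLeft F W.polynomial).comp Ψ))
      have hμ : ∀ d j, μ d j = MvPolynomial.coeff (mons j : Fin 3 →₀ ℕ) (W.polynomial * Ψ d) := by
        intro d j
        simp [μ, LinearMap.pi_apply, MvPolynomial.lcoeff_apply, LinearMap.mulLeft_apply]
      have hΦμ : ∀ d, Φ (μ d) = W.polynomial * Ψ d := by
        intro d
        have hprod : (W.polynomial * Ψ d).IsHomogeneous (k + 3) := by
          have : (Ψ d).IsHomogeneous k := by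
            rw [hΨapply]
            apply MvPolynomial.IsHomogeneous.sum
            intro j _
            exact MvPolynomial.isHomogeneous_monomial _
              (by rw [aux_degree_eq_sum]; exact (em j).2)
          simpa [add_comm] using (aux_polyW_homog W).mul this
        rw [show μ d = (fun j => MvPolynomial.coeff (mons j : Fin 3 →₀ ℕ)
          (W.polynomial * Ψ d)) from funext (hμ d)]
        exact hΦrecon _ hprod
      have hμinj : Function.Injective μ := by
        intro d d' hdd
        have h1 : W.polynomial * Ψ d = W.polynomial * Ψ d' := by
          rw [← hΦμ, ← hΦμ, hdd]
        have h2 : Ψ d = Ψ d' := mul_left_cancel₀ (aux_polyW_ne_zero W) h1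
        funext j
        rw [← hΨcoeff d j, ← hΨcoeff d' j, h2]
      have hrangeμ : LinearMap.range μ = K := by
        ext c
        constructor
        · rintro ⟨d, rfl⟩
          rw [hmemK]
          exact ⟨Ψ d, hΦμ d⟩
        · intro hc
          obtain ⟨D, hDhom, hCD, _⟩ :=
            aux_homog_factor (aux_polyW_homog W) (hΦhomog c) ((hmemK c).mp hc)
          have hDhom' : D.IsHomogeneous k := by
            have : k + 3 - 3 = k := by omega
            rwa [this] at hDhom
          refine ⟨fun j => MvPolynomial.coeff (em j : Fin 3 →₀ ℕ) D, ?_⟩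
          have hΨD : Ψ (fun j => MvPolynomial.coeff (em j : Fin 3 →₀ ℕ) D) = D :=
            hΨrecon D hDhom'
          funext j
          rw [hμ, hΨD, ← hCD, hΦcoeff]
      have hKrank : Module.finrank F K = (k + 1) * (k + 2) / 2 := by
        rw [← hrangeμ, LinearMap.finrank_range_of_inj hμinj, Module.finrank_pi,
          Fintype.card_fin]
      have harith : (k + 3 + 1) * (k + 3 + 2) / 2 = (k + 1) * (k + 2) / 2 + 3 * (k + 3) := by
        have h1 : (k + 3 + 1) * (k + 3 + 2) = (k + 1) * (k + 2) + 2 * (3 * (k + 3)) := by ring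
        rw [h1, Nat.add_mul_div_left _ _ (by norm_num : 0 < 2)]
      omega
  -- the evaluation functionals
  let φ : Fin (3 * n' + l) → Module.Dual F (Fin ((n' + 1) * (n' + 2) / 2) → F) :=
    fun i => ∑ j, M i j • LinearMap.proj j
  have hφ : ∀ i c, φ i c = ∑ j, M i j * c j := by
    intro i c
    simp [φ, LinearMap.sum_apply]
  have hφeval : ∀ i c, φ i c = MvPolynomial.eval (rep i) (Φ c) := by
    intro i c
    rw [hφ, hΦeval]
  have hker : ∀ i, K ≤ LinearMap.ker (φ i) := by
    intro i c hc
    rw [LinearMap.mem_ker, hφeval]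
    obtain ⟨D, hD⟩ := (hmemK c).mp hc
    rw [hD, map_mul, heq i, zero_mul]
  let ψ : Fin (3 * n' + l) → Module.Dual F ((Fin ((n' + 1) * (n' + 2) / 2) → F) ⧸ K) :=
    fun i => K.liftQ (φ i) (hker i)
  have hψ : ∀ i c, ψ i (Submodule.Quotient.mk c) = φ i c := by
    intro i c
    simp [ψ, Submodule.liftQ_apply]
  constructor
  · -- forward direction
    rintro ⟨v, hv0, hvM, Z, hZcard, hZ0⟩
    have hcompl : Zᶜ.card ≤ 3 * n' := by
      have h1 := Finset.card_compl Z
      have h2 : Fintype.card (Fin (3 * n' + l)) = 3 * n' + l := Fintype.card_fin _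
      omega
    obtain ⟨S, hZS, -, hScard⟩ := Finset.exists_subsuperset_card_eq (Finset.subset_univ Zᶜ)
      hcompl (by simp)
    have hvS : ∀ i, i ∉ S → v i = 0 := by
      intro i hi
      apply hZ0
      by_contra h
      exact hi (hZS (Finset.mem_compl.mpr h))
    have hcol : ∀ jj, ∑ i, v i * M i jj = 0 := by
      intro jj
      have := congrFun hvM jj
      simpa [Matrix.vecMul, dotProduct] using this
    have hgsum : ∑ i : {x // x ∈ S}, v ↑i • ψ ↑i = 0 := by
      refine LinearMap.ext fun q => ?_
      obtain ⟨c, rfl⟩ := Submodule.Quotient.mk_surjective K q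
      have h1 : (∑ i : {x // x ∈ S}, v ↑i • ψ ↑i) (Submodule.Quotient.mk c)
          = ∑ i : {x // x ∈ S}, v ↑i * φ ↑i c := by
        simp [LinearMap.sum_apply, hψ]
      rw [h1]
      have h2 : ∑ i : {x // x ∈ S}, v ↑i * φ ↑i c = ∑ i ∈ S, v i * φ i c :=
        Finset.sum_attach S (fun i => v i * φ i c)
      rw [h2]
      have h3 : ∑ i ∈ S, v i * φ i c = ∑ i, v i * φ i c := by
        apply Finset.sum_subset (Finset.subset_univ S)
        intro i _ hi
        rw [hvS i hi, zero_mul]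
      rw [h3]
      have h4 : ∑ i, v i * φ i c = ∑ jj, (∑ i, v i * M i jj) * c jj := by
        simp_rw [hφ, Finset.mul_sum, Finset.sum_mul]
        rw [Finset.sum_comm]
        congr 1
        funext jj
        congr 1
        funext i
        ring
      rw [h4]
      simp [hcol]
    obtain ⟨i1, hi1⟩ := Function.ne_iff.mp hv0
    have hi1S : i1 ∈ S := by
      by_contra h
      exact hi1 (hvS i1 h)
    obtain ⟨q, hq0, hqz⟩ := (aux_dep_iff_common_zero (fun i : {x // x ∈ S} => ψ ↑i)
      (by rw [Fintype.card_coe, hScard, hrank])).mp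
      ⟨fun i => v ↑i, ⟨⟨i1, hi1S⟩, hi1⟩, hgsum⟩
    obtain ⟨c, rfl⟩ := Submodule.Quotient.mk_surjective K q
    have hcK : c ∉ K := by
      intro h
      exact hq0 ((Submodule.Quotient.mk_eq_zero K).mpr h)
    refine ⟨S, hScard, Φ c, ?_, hΦhomog c, ?_, ?_⟩
    · intro h0
      exact hcK ((hmemK c).mpr (h0 ▸ dvd_zero W.polynomial))
    · intro hd
      exact hcK ((hmemK c).mpr hd)
    · intro i hi
      rw [← hφeval, ← hψ]
      exact hqz ⟨i, hi⟩
  · -- backward direction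
    rintro ⟨S, hScard, C, hC0, hChom, hCdvd, hCeval⟩
    set c : Fin ((n' + 1) * (n' + 2) / 2) → F :=
      fun j => MvPolynomial.coeff (mons j : Fin 3 →₀ ℕ) C with hc
    have hΦc : Φ c = C := hΦrecon C hChom
    have hcK : c ∉ K := fun h => hCdvd (hΦc ▸ (hmemK c).mp h)
    have hq0 : (Submodule.Quotient.mk c : (Fin ((n' + 1) * (n' + 2) / 2) → F) ⧸ K) ≠ 0 := by
      intro h
      exact hcK ((Submodule.Quotient.mk_eq_zero K).mp h)
    have hqz : ∀ i : {x // x ∈ S}, ψ ↑i (Submodule.Quotient.mk c) = 0 := by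
      rintro ⟨i, hi⟩
      rw [hψ, hφeval, hΦc]
      exact hCeval i hi
    obtain ⟨g, ⟨i0, hi0⟩, hgsum⟩ := (aux_dep_iff_common_zero (fun i : {x // x ∈ S} => ψ ↑i)
      (by rw [Fintype.card_coe, hScard, hrank])).mpr ⟨Submodule.Quotient.mk c, hq0, hqz⟩
    refine ⟨fun i => if h : i ∈ S then g ⟨i, h⟩ else 0, ?_, ?_, Sᶜ, ?_, ?_⟩
    · intro h
      have := congrFun h ↑i0
      rw [dif_pos i0.2] at this
      simp only [Pi.zero_apply] at this
      exact hi0 (by rwa [Subtype.coe_eta] at this)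
    · funext jj
      have hsingle : ∀ i, φ i (Pi.single jj 1) = M i jj := by
        intro i
        rw [hφ, Finset.sum_eq_single jj]
        · simp
        · intro b _ hb
          rw [Pi.single_eq_of_ne hb, mul_zero]
        · intro h
          exact absurd (Finset.mem_univ _) h
      have happ := congrArg (fun f : Module.Dual F ((Fin ((n' + 1) * (n' + 2) / 2) → F) ⧸ K) =>
        f (Submodule.Quotient.mk (Pi.single jj 1))) hgsum
      simp only [LinearMap.sum_apply, LinearMap.smul_apply, LinearMap.zero_apply,
        smul_eq_mul] at happ
      have happ' : ∑ i : {x // x ∈ S}, g i * M ↑i jj = 0 := by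
        rw [← happ]
        refine Finset.sum_congr rfl fun i _ => ?_
        rw [hψ, hsingle]
      have hv : Matrix.vecMul (fun i => if h : i ∈ S then g ⟨i, h⟩ else 0) M jj
          = ∑ i, (if h : i ∈ S then g ⟨i, h⟩ else 0) * M i jj := by
        simp [Matrix.vecMul, dotProduct]
      rw [hv]
      have h5 : ∑ i, (if h : i ∈ S then g ⟨i, h⟩ else 0) * M i jj
          = ∑ i ∈ S, (if h : i ∈ S then g ⟨i, h⟩ else 0) * M i jj := by
        symm
        apply Finset.sum_subset (Finset.subset_univ S)
        intro i _ hi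
        rw [dif_neg hi, zero_mul]
      rw [h5, ← Finset.sum_attach S (fun i => (if h : i ∈ S then g ⟨i, h⟩ else 0) * M i jj)]
      have h6 : ∑ x ∈ S.attach, (if h : (x : Fin (3 * n' + l)) ∈ S then g ⟨x, h⟩ else 0) * M ↑x jj
          = ∑ i : {x // x ∈ S}, g i * M ↑i jj := by
        rw [← Finset.univ_eq_attach]
        refine Finset.sum_congr rfl fun i _ => ?_
        rw [dif_pos i.2, Subtype.coe_eta]
      rw [h6]
      exact happ'
    · rw [Finset.card_compl, hScard, Fintype.card_fin]
      omega
    · intro i hi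
      exact dif_neg (Finset.mem_compl.mp hi)
end
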